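/- arXiv:1503.08686 — 5 statements merged into one kernel-verified Lean document; each statement's English description precedes it below -/
import Mathlib

section
/- Let a, c ∈ (0,∞)^d satisfy ∑_{i=1}^d a_i²/c_i > 1. Then the symmetric matrix D = a aᵀ − diag(c) has exactly one positive eigenvalue, and this eigenvalue is simple. -/
/-!
The quadratic form of `D = a aᵀ - diag c` is `(a ⬝ᵥ x)² - ∑ cᵢ xᵢ²`. It is nonpositive on the
hyperplane `a ⬝ᵥ x = 0`, which meets the span of any two orthonormal eigenvectors, so at most
one eigenvalue is positive. It is positive at `x = a / c`, where it equals `S² - S` with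
`S = ∑ aᵢ² / cᵢ > 1`, so some eigenvalue is positive.
-/

open Matrix Finset

namespace Matrix.IsHermitian

variable {n : Type*} [Fintype n] [DecidableEq n] {A : Matrix n n ℝ} (hA : A.IsHermitian)
include hA

lemma posSemidef_neg_of_eigenvalues_nonpos (h : ∀ i, hA.eigenvalues i ≤ 0) : (-A).PosSemidef := by
  rw [hA.spectral_theorem, ← map_neg, diagonal_neg]
  simpa [Unitary.isUnit_coe.posSemidef_star_right_conjugate_iff, Pi.le_def] using h

lemma exists_eigenvalues_pos_of_dotProduct_mulVec_pos {x : n → ℝ} (hx : 0 < x ⬝ᵥ A *ᵥ x) :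
    ∃ i, 0 < hA.eigenvalues i := by
  by_contra! h
  have := (hA.posSemidef_neg_of_eigenvalues_nonpos h).dotProduct_mulVec_nonneg x
  simp only [star_trivial, neg_mulVec, dotProduct_neg, Left.nonneg_neg_iff] at this
  linarith

lemma eigenvectorBasis_dotProduct (i j : n) :
    ⇑(hA.eigenvectorBasis i) ⬝ᵥ ⇑(hA.eigenvectorBasis j) = if i = j then 1 else 0 := by
  rw [← orthonormal_iff_ite.mp hA.eigenvectorBasis.orthonormal i j,
    EuclideanSpace.inner_eq_star_dotProduct, star_trivial, dotProduct_comm]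

lemma eigenvectorBasis_dotProduct_mulVec_self (i : n) :
    ⇑(hA.eigenvectorBasis i) ⬝ᵥ A *ᵥ ⇑(hA.eigenvectorBasis i) = hA.eigenvalues i := by
  simp [mulVec_eigenvectorBasis, eigenvectorBasis_dotProduct]

lemma dotProduct_mulVec_add_eigenvectorBasis {i j : n} (hij : i ≠ j) (α β : ℝ) :
    let w := α • ⇑(hA.eigenvectorBasis i) + β • ⇑(hA.eigenvectorBasis j)
    w ⬝ᵥ A *ᵥ w = α ^ 2 * hA.eigenvalues i + β ^ 2 * hA.eigenvalues j := by
  simp only [mulVec_add, mulVec_smul, mulVec_eigenvectorBasis, add_dotProduct, dotProduct_add,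
    smul_dotProduct, dotProduct_smul, eigenvectorBasis_dotProduct, if_neg hij, if_neg hij.symm,
    if_true, smul_eq_mul]
  ring

lemma card_filter_eigenvalues_pos_le_one (a : n → ℝ)
    (hQ : ∀ x, a ⬝ᵥ x = 0 → x ⬝ᵥ A *ᵥ x ≤ 0) :
    (univ.filter fun i => 0 < hA.eigenvalues i).card ≤ 1 := by
  refine card_le_one.mpr fun i hi j hj => ?_
  simp only [mem_filter, mem_univ, true_and] at hi hj
  by_contra hij
  set u := ⇑(hA.eigenvectorBasis i)
  set v := ⇑(hA.eigenvectorBasis j)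
  have hw : a ⬝ᵥ ((a ⬝ᵥ v) • u + (-(a ⬝ᵥ u)) • v) = 0 := by
    simp only [dotProduct_add, dotProduct_smul, smul_eq_mul]
    ring
  have hQw := hQ _ hw
  rw [hA.dotProduct_mulVec_add_eigenvectorBasis hij] at hQw
  have hau : (a ⬝ᵥ u) ^ 2 * hA.eigenvalues j ≤ 0 := by
    nlinarith [mul_nonneg (sq_nonneg (a ⬝ᵥ v)) hi.le]
  replace hau : a ⬝ᵥ u = 0 := by
    simpa using nonpos_of_mul_nonpos_left hau hj
  have hQu := hQ u hau
  rw [hA.eigenvectorBasis_dotProduct_mulVec_self] at hQu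
  linarith

end Matrix.IsHermitian

section RankOnePerturbation

variable {n : Type*} [Fintype n] [DecidableEq n] (a : n → ℝ) {c : n → ℝ}

lemma dotProduct_mulVec_vecMulVec_sub_diagonal (x : n → ℝ) :
    x ⬝ᵥ (vecMulVec a a - diagonal c) *ᵥ x = (a ⬝ᵥ x) ^ 2 - ∑ i, c i * x i ^ 2 := by
  have hdiag : x ⬝ᵥ diagonal c *ᵥ x = ∑ i, c i * x i ^ 2 :=
    sum_congr rfl fun i _ => by rw [mulVec_diagonal]; ring
  rw [sub_mulVec, dotProduct_sub, vecMulVec_mulVec, op_smul_eq_smul, dotProduct_smul, hdiag,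
    smul_eq_mul, dotProduct_comm x a, sq]

lemma dotProduct_mulVec_vecMulVec_sub_diagonal_nonpos (hc : ∀ i, 0 ≤ c i) {x : n → ℝ}
    (hx : a ⬝ᵥ x = 0) : x ⬝ᵥ (vecMulVec a a - diagonal c) *ᵥ x ≤ 0 := by
  rw [dotProduct_mulVec_vecMulVec_sub_diagonal, hx]
  nlinarith [sum_nonneg fun i (_ : i ∈ univ) => mul_nonneg (hc i) (sq_nonneg (x i))]

lemma div_dotProduct_mulVec_vecMulVec_sub_diagonal_div (hc : ∀ i, c i ≠ 0) :
    (a / c) ⬝ᵥ (vecMulVec a a - diagonal c) *ᵥ (a / c)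
      = (∑ i, a i ^ 2 / c i) ^ 2 - ∑ i, a i ^ 2 / c i := by
  have hlin : a ⬝ᵥ (a / c) = ∑ i, a i ^ 2 / c i :=
    sum_congr rfl fun i _ => by rw [Pi.div_apply]; ring
  have hdiag : ∑ i, c i * (a / c) i ^ 2 = ∑ i, a i ^ 2 / c i :=
    sum_congr rfl fun i _ => by rw [Pi.div_apply]; field_simp [hc i]
  rw [dotProduct_mulVec_vecMulVec_sub_diagonal, hlin, hdiag]

end RankOnePerturbation

theorem unique_simple_positive_eigenvalue_rank_one_general {d : ℕ} (a c : Fin d → ℝ)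
    (hc : ∀ i, 0 < c i)
    (hsum : 1 < ∑ i, a i ^ 2 / c i)
    (hD : (Matrix.vecMulVec a a - Matrix.diagonal c).IsHermitian) :
    (Finset.univ.filter fun i => 0 < hD.eigenvalues i).card = 1 := by
  have hpos : 0 < (a / c) ⬝ᵥ (vecMulVec a a - diagonal c) *ᵥ (a / c) := by
    rw [div_dotProduct_mulVec_vecMulVec_sub_diagonal_div a fun i => (hc i).ne']
    nlinarith
  obtain ⟨i, hi⟩ := hD.exists_eigenvalues_pos_of_dotProduct_mulVec_pos hpos
  have hneg := fun x (hx : a ⬝ᵥ x = 0) =>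
    dotProduct_mulVec_vecMulVec_sub_diagonal_nonpos a (fun i => (hc i).le) hx
  exact le_antisymm (hD.card_filter_eigenvalues_pos_le_one a hneg)
    (card_pos.mpr ⟨i, by simpa using hi⟩)

theorem unique_simple_positive_eigenvalue_rank_one {d : ℕ} (a c : Fin d → ℝ)
    (ha : ∀ i, 0 < a i) (hc : ∀ i, 0 < c i)
    (hsum : 1 < ∑ i, a i ^ 2 / c i)
    (hD : (Matrix.vecMulVec a a - Matrix.diagonal c).IsHermitian) :
    (Finset.univ.filter fun i => 0 < hD.eigenvalues i).card = 1 :=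
  unique_simple_positive_eigenvalue_rank_one_general a c hc hsum hD
end

section
/- Let a, c ∈ (0,∞)^d with ∑_{i=1}^d a_i²/c_i > 1, and let λ be the unique positive eigenvalue of D = a aᵀ − diag(c). Then any eigenvector v of D associated with λ has all coordinates nonzero and of the same sign. -/
open Matrix Finset

theorem eigenvector_same_sign {d : ℕ} (a c : Fin d → ℝ) (lam : ℝ) (v : Fin d → ℝ)
    (ha : ∀ i, 0 < a i) (hc : ∀ i, 0 < c i)
    (hsum : 1 < ∑ i, a i ^ 2 / c i)
    (hlam : 0 < lam) (hv : v ≠ 0)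
    (heig : (Matrix.vecMulVec a a - Matrix.diagonal c).mulVec v = lam • v) :
    (∀ i, 0 < v i) ∨ (∀ i, v i < 0) := by
  set S := ∑ j, a j * v j with hS
  have key : ∀ i, (lam + c i) * v i = a i * S := by
    intro i
    have h := congrFun heig i
    simp only [Matrix.sub_mulVec, Pi.sub_apply, Matrix.mulVec_diagonal,
      Pi.smul_apply, smul_eq_mul] at h
    have h2 : (Matrix.vecMulVec a a).mulVec v i = a i * S := by
      simp [Matrix.mulVec, Matrix.vecMulVec_apply, dotProduct, hS, Finset.mul_sum,
        mul_assoc]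
    rw [h2] at h
    linarith
  have hpos : ∀ i, 0 < lam + c i := fun i => by have := hc i; linarith
  have hv' : ∀ i, v i = a i * S / (lam + c i) := by
    intro i
    rw [eq_div_iff (ne_of_gt (hpos i))]
    linarith [key i]
  have hSne : S ≠ 0 := by
    intro h0
    apply hv
    funext i
    have := hv' i
    simp [h0, this]
  rcases lt_or_gt_of_ne hSne with hneg | hposS
  · right
    intro i
    rw [hv' i]
    exact div_neg_of_neg_of_pos (mul_neg_of_pos_of_neg (ha i) hneg) (hpos i)
  · left
    intro i
    rw [hv' i]
    exact div_pos (mul_pos (ha i) hposS) (hpos i)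
end

section
/- Let a, c ∈ (0,∞)^d with ∑_{i=1}^d a_i²/c_i > 1, and let λ be the unique positive eigenvalue of D = a aᵀ − diag(c). Then for any x ∈ (0,∞)^d with ∑_j x_j = 1 and such that T := a_j²/x_j − c_j is the same for all j, one has T = λ. In particular the common value T is uniquely determined. -/
/-!
Both values solve the secular equation `∑ⱼ aⱼ² / (μ + cⱼ) = 1`. For an eigenvector `v` of
`D = a aᵀ - diag c` with eigenvalue `μ`, the `j`-th row reads `(μ + cⱼ) vⱼ = aⱼ ⟨a, v⟩`; solving
for `vⱼ` and pairing with `a` gives the equation after cancelling `⟨a, v⟩ ≠ 0`. For an equal-value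
point, `T + cⱼ = aⱼ² / xⱼ`, so the `j`-th term is `xⱼ` and the terms sum to `1`. The left-hand side
is strictly decreasing on `{μ | ∀ j, 0 < μ + cⱼ}`, which contains both `λ` and `T`.
-/

open Matrix Finset

namespace SecularEquation

variable {ι : Type*} [Fintype ι]

/-- The secular function of the rank-one perturbation `a aᵀ - diag c`. -/
noncomputable def secular (a c : ι → ℝ) (μ : ℝ) : ℝ :=
  ∑ j, a j ^ 2 / (μ + c j)

theorem vecMulVec_sub_diagonal_mulVec_apply [DecidableEq ι] (a c v : ι → ℝ) (j : ι) :
    ((vecMulVec a a - diagonal c) *ᵥ v) j = a j * (a ⬝ᵥ v) - c j * v j := by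
  rw [sub_mulVec, Pi.sub_apply, vecMulVec_mulVec, mulVec_diagonal]
  simp

theorem secular_eq_one_of_mulVec_eq_smul [DecidableEq ι] {a c v : ι → ℝ} {μ : ℝ}
    (hμ : ∀ j, μ + c j ≠ 0) (hv : v ≠ 0)
    (h : (vecMulVec a a - diagonal c) *ᵥ v = μ • v) :
    secular a c μ = 1 := by
  set s := a ⬝ᵥ v
  have hv_eq : ∀ j, v j = a j * s / (μ + c j) := fun j => by
    have hj := congrFun h j
    rw [vecMulVec_sub_diagonal_mulVec_apply, Pi.smul_apply, smul_eq_mul] at hj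
    rw [eq_div_iff (hμ j)]
    linarith
  have hs : s ≠ 0 := fun hs => hv <| funext fun j => by simp [hv_eq j, hs]
  have hs_fixed : secular a c μ * s = 1 * s := by
    rw [one_mul, secular, sum_mul]
    conv_rhs => rw [show s = ∑ j, a j * v j from rfl]
    refine sum_congr rfl fun j _ => ?_
    rw [hv_eq j]
    ring
  exact mul_right_cancel₀ hs hs_fixed

theorem secular_eq_one_of_equal_value {a c x : ι → ℝ} {T : ℝ} (ha : ∀ j, a j ≠ 0)
    (hx_sum : ∑ j, x j = 1) (hT : ∀ j, a j ^ 2 / x j - c j = T) :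
    secular a c T = 1 := by
  rw [← hx_sum, secular]
  refine sum_congr rfl fun j _ => ?_
  rw [← hT j, sub_add_cancel, div_div_cancel₀ (pow_ne_zero 2 (ha j))]

theorem strictAntiOn_secular [Nonempty ι] {a : ι → ℝ} (ha : ∀ j, a j ≠ 0) (c : ι → ℝ) :
    StrictAntiOn (secular a c) {μ | ∀ j, 0 < μ + c j} := fun μ hμ ν hν hμν =>
  sum_lt_sum_of_nonempty univ_nonempty fun j _ =>
    div_lt_div_of_pos_left (sq_pos_of_ne_zero (ha j)) (hμ j) (by linarith)

end SecularEquation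

open SecularEquation in
theorem equal_precision_value_is_eigenvalue_general {d : ℕ} (a c : Fin d → ℝ) (lam : ℝ)
    (ha : ∀ i, 0 < a i) (hc : ∀ i, 0 < c i)
    (hlam : 0 < lam)
    (heig : ∃ v : Fin d → ℝ, v ≠ 0 ∧
      (Matrix.vecMulVec a a - Matrix.diagonal c).mulVec v = lam • v) :
    ∀ (x : Fin d → ℝ) (T : ℝ), (∀ j, 0 < x j) → ∑ j, x j = 1 →
      (∀ j, a j ^ 2 / x j - c j = T) → T = lam := by
  intro x T hx hx_sum hT
  obtain ⟨v, hv, hev⟩ := heig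
  have : Nonempty (Fin d) := by
    by_contra h
    simp [not_nonempty_iff.mp h] at hx_sum
  have ha' : ∀ j, a j ≠ 0 := fun j => (ha j).ne'
  have hlam_mem : ∀ j, 0 < lam + c j := fun j => add_pos hlam (hc j)
  have hT_mem : ∀ j, 0 < T + c j := fun j => by
    rw [← hT j, sub_add_cancel]
    exact div_pos (pow_pos (ha j) 2) (hx j)
  refine (strictAntiOn_secular ha' c).injOn hT_mem hlam_mem ?_
  rw [secular_eq_one_of_equal_value ha' hx_sum hT,
    secular_eq_one_of_mulVec_eq_smul (fun j => (hlam_mem j).ne') hv hev]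

theorem equal_precision_value_is_eigenvalue {d : ℕ} (a c : Fin d → ℝ) (lam : ℝ)
    (ha : ∀ i, 0 < a i) (hc : ∀ i, 0 < c i)
    (hsum : 1 < ∑ i, a i ^ 2 / c i)
    (hlam : 0 < lam)
    (heig : ∃ v : Fin d → ℝ, v ≠ 0 ∧
      (Matrix.vecMulVec a a - Matrix.diagonal c).mulVec v = lam • v) :
    ∀ (x : Fin d → ℝ) (T : ℝ), (∀ j, 0 < x j) → ∑ j, x j = 1 →
      (∀ j, a j ^ 2 / x j - c j = T) → T = lam :=
  equal_precision_value_is_eigenvalue_general a c lam ha hc hlam heig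
end

section
/- Fix J ≥ 1, positive reals A_{j,h} (h = 1,...,H_j, j = 1,...,J), c_j > 0, and x > 0 with ∑_j (∑_h √A_{j,h})² / c_j > x. Consider x_{j,h} > 0 subject to ∑_{j,h} x_{j,h} = x and such that T := ∑_h A_{j,h}/x_{j,h} − c_j has a common value T for all j. Then the minimal such T equals the unique positive eigenvalue λ of D = a aᵀ − diag(c), where a_j = (∑_h √A_{j,h})/√x, and the minimum is attained at x_{j,h} = x v_j √A_{j,h} / ∑_k v_k ∑_g √A_{k,g}, with v a positive eigenvector of D for λ. -/
open Matrix Finset Real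

theorem single_stage_optimal_equal_precision_allocation
    {J : ℕ} (hJ : 1 ≤ J) (H : Fin J → ℕ)
    (A : (j : Fin J) → Fin (H j) → ℝ) (c : Fin J → ℝ) (x : ℝ)
    (hA : ∀ j h, 0 < A j h) (hc : ∀ j, 0 < c j) (hx : 0 < x)
    (hcond : x < ∑ j, (∑ h, Real.sqrt (A j h)) ^ 2 / c j)
    (a : Fin J → ℝ) (ha : ∀ j, a j = (∑ h, Real.sqrt (A j h)) / Real.sqrt x)
    (lam : ℝ) (v : Fin J → ℝ)
    (hlam : 0 < lam) (hv : ∀ j, 0 < v j)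
    (heig : (Matrix.vecMulVec a a - Matrix.diagonal c).mulVec v = lam • v)
    (xopt : (j : Fin J) → Fin (H j) → ℝ)
    (hxopt : ∀ j h, xopt j h =
      x * (v j * Real.sqrt (A j h)) / (∑ k, v k * ∑ g, Real.sqrt (A k g))) :
    -- the candidate allocation is feasible with common precision lam
    ((∀ j h, 0 < xopt j h) ∧ (∑ j, ∑ h, xopt j h) = x ∧
      (∀ j, ∑ h, A j h / xopt j h - c j = lam)) ∧
    -- and lam is minimal among all feasible common precisions
    (∀ (y : (j : Fin J) → Fin (H j) → ℝ) (T : ℝ),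
      (∀ j h, 0 < y j h) → (∑ j, ∑ h, y j h) = x →
      (∀ j, ∑ h, A j h / y j h - c j = T) → lam ≤ T) := by
  have hJne : Nonempty (Fin J) := Fin.pos_iff_nonempty.mp hJ
  set S : Fin J → ℝ := fun j => ∑ h, Real.sqrt (A j h) with hS
  set W : ℝ := ∑ k, v k * S k with hW
  have hsx : Real.sqrt x ≠ 0 := (Real.sqrt_pos.mpr hx).ne'
  have hxx : Real.sqrt x * Real.sqrt x = x := Real.mul_self_sqrt hx.le
  -- key identity from the eigenvalue equation
  have hstar : ∀ j, S j * W = x * ((lam + c j) * v j) := by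
    intro j
    have h := congrFun heig j
    simp only [Matrix.mulVec, dotProduct, Matrix.sub_apply, Matrix.vecMulVec_apply,
      Matrix.diagonal_apply, sub_mul, Finset.sum_sub_distrib, ite_mul, zero_mul,
      Finset.sum_ite_eq, Finset.mem_univ, if_true, Pi.smul_apply, smul_eq_mul] at h
    have h1 : a j * (∑ k, a k * v k) - c j * v j = lam * v j := by
      rw [Finset.mul_sum]
      convert h using 2
      exact Finset.sum_congr rfl fun k _ => by ring
    have h2 : (∑ k, a k * v k) = W / Real.sqrt x := by
      rw [hW, Finset.sum_div]
      refine Finset.sum_congr rfl fun k _ => ?_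
      rw [ha k]; ring
    rw [h2, ha j] at h1
    have h3 : (S j / Real.sqrt x) * (W / Real.sqrt x) = S j * W / x := by
      rw [div_mul_div_comm, hxx]
    rw [h3] at h1
    have hxne : x ≠ 0 := hx.ne'
    field_simp at h1
    linear_combination h1
  have hSnn : ∀ j, (0:ℝ) ≤ S j := fun j =>
    Finset.sum_nonneg fun h _ => Real.sqrt_nonneg _
  have hWpos : 0 < W := by
    obtain ⟨j0⟩ := hJne
    have h := hstar j0
    have hp : 0 < x * ((lam + c j0) * v j0) :=
      mul_pos hx (mul_pos (by linarith [hc j0]) (hv j0))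
    nlinarith [hSnn j0]
  have hSpos : ∀ j, 0 < S j := by
    intro j
    have h := hstar j
    have hp : 0 < x * ((lam + c j) * v j) :=
      mul_pos hx (mul_pos (by linarith [hc j]) (hv j))
    nlinarith [hSnn j]
  -- x = ∑ S j ^ 2 / (lam + c j)
  have hxeq : (∑ j, S j ^ 2 / (lam + c j)) = x := by
    have h4 : W * x = W * ∑ j, S j ^ 2 / (lam + c j) := by
      rw [Finset.mul_sum]
      calc W * x = ∑ j, v j * S j * x := by rw [hW, Finset.sum_mul]
        _ = ∑ j, W * (S j ^ 2 / (lam + c j)) := by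
            refine Finset.sum_congr rfl fun j _ => ?_
            have hlc : (0:ℝ) < lam + c j := by have := hc j; linarith
            rw [← mul_div_assoc, eq_div_iff hlc.ne']
            linear_combination (-(S j)) * hstar j
    exact (mul_left_cancel₀ hWpos.ne' h4).symm
  constructor
  · refine ⟨?_, ?_, ?_⟩
    · intro j h
      rw [hxopt j h]
      exact div_pos (mul_pos hx (mul_pos (hv j) (Real.sqrt_pos.mpr (hA j h)))) hWpos
    · calc ∑ j, ∑ h, xopt j h = ∑ j, (x / W) * (v j * S j) := by
            refine Finset.sum_congr rfl fun j _ => ?_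
            have h1 : (∑ h, xopt j h) = ∑ h, (x / W) * (v j * Real.sqrt (A j h)) :=
              Finset.sum_congr rfl fun h _ => by rw [hxopt j h]; ring
            rw [h1, ← Finset.mul_sum, ← Finset.mul_sum]
        _ = (x / W) * W := by rw [← Finset.mul_sum]
        _ = x := by field_simp
    · intro j
      have hterm : ∀ h, A j h / xopt j h = (W / (x * v j)) * Real.sqrt (A j h) := by
        intro h
        rw [hxopt j h]
        set s := Real.sqrt (A j h) with hsd
        have hs2 : s * s = A j h := Real.mul_self_sqrt (hA j h).le
        have hsne : s ≠ 0 := (Real.sqrt_pos.mpr (hA j h)).ne'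
        rw [← hs2, div_div_eq_mul_div, div_mul_eq_mul_div, div_eq_div_iff
          (mul_pos hx (mul_pos (hv j) ((Real.sqrt_pos.mpr (hA j h)).trans_eq hsd.symm))).ne'
          (mul_pos hx (hv j)).ne']
        ring
      have hsum : (∑ h, A j h / xopt j h) = (W / (x * v j)) * S j := by
        rw [show (∑ h, A j h / xopt j h) = ∑ h, (W / (x * v j)) * Real.sqrt (A j h) from
          Finset.sum_congr rfl fun h _ => hterm h, ← Finset.mul_sum]
      rw [hsum]
      have hkey : W / (x * v j) * S j = lam + c j := by
        rw [div_mul_eq_mul_div, div_eq_iff (mul_pos hx (hv j)).ne']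
        linear_combination hstar j
      rw [hkey]; ring
  · intro y T hy hysum hyT
    by_contra hcon
    push_neg at hcon
    have hne : ∀ j, (Finset.univ : Finset (Fin (H j))).Nonempty := by
      intro j
      rcases (Finset.univ : Finset (Fin (H j))).eq_empty_or_nonempty with he | hne
      · exfalso
        have h0 : S j = 0 := by simp only [hS]; rw [he, Finset.sum_empty]
        exact absurd h0 (hSpos j).ne'
      · exact hne
    have hTc : ∀ j, 0 < T + c j := by
      intro j
      have h := hyT j
      have hpos : 0 < ∑ h, A j h / y j h :=
        Finset.sum_pos (fun h _ => div_pos (hA j h) (hy j h)) (hne j)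
      linarith
    have hCS : ∀ j, S j ^ 2 / (T + c j) ≤ ∑ h, y j h := by
      intro j
      have key : S j ^ 2 ≤ (T + c j) * ∑ h, y j h := by
        have hcs := Finset.sum_mul_sq_le_sq_mul_sq Finset.univ
          (fun h => Real.sqrt (A j h / y j h)) (fun h => Real.sqrt (y j h))
        have h1 : (∑ h, Real.sqrt (A j h / y j h) * Real.sqrt (y j h)) = S j := by
          simp only [hS]
          refine Finset.sum_congr rfl fun h _ => ?_
          rw [← Real.sqrt_mul (div_pos (hA j h) (hy j h)).le,
            div_mul_cancel₀ _ (hy j h).ne']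
        have h2 : (∑ h, Real.sqrt (A j h / y j h) ^ 2) = T + c j := by
          have h := hyT j
          have h2' : (∑ h, Real.sqrt (A j h / y j h) ^ 2) = ∑ h, A j h / y j h :=
            Finset.sum_congr rfl fun h _ =>
              Real.sq_sqrt (div_pos (hA j h) (hy j h)).le
          linarith
        have h3 : (∑ h, Real.sqrt (y j h) ^ 2) = ∑ h, y j h :=
          Finset.sum_congr rfl fun h _ => Real.sq_sqrt (hy j h).le
        rw [h1, h2, h3] at hcs
        exact hcs
      rw [div_le_iff₀ (hTc j)]
      linarith [key]
    have hlt : ∀ j, S j ^ 2 / (lam + c j) < S j ^ 2 / (T + c j) := fun j =>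
      div_lt_div_of_pos_left (pow_pos (hSpos j) 2) (hTc j) (by linarith)
    have hfalse : x < x := by
      calc x = ∑ j, S j ^ 2 / (lam + c j) := hxeq.symm
        _ < ∑ j, S j ^ 2 / (T + c j) :=
            Finset.sum_lt_sum_of_nonempty Finset.univ_nonempty fun j _ => hlt j
        _ ≤ ∑ j, ∑ h, y j h := Finset.sum_le_sum fun j _ => hCS j
        _ = x := hysum
    exact absurd hfalse (lt_irrefl x)
end

section
/- For a, c ∈ (0,∞)^d with ∑_i a_i²/c_i > 1, among all x ∈ (0,∞)^d with ∑_j x_j = 1 there exists exactly one x for which the values a_j²/x_j − c_j (j = 1,...,d) are all equal, and the common value is then positive and equals the unique positive eigenvalue of a aᵀ − diag(c). -/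
open Matrix Finset

theorem exists_unique_equal_precision_point {d : ℕ} (a c : Fin d → ℝ) (lam : ℝ)
    (ha : ∀ i, 0 < a i) (hc : ∀ i, 0 < c i)
    (hsum : 1 < ∑ i, a i ^ 2 / c i)
    (hlam : 0 < lam)
    (heig : ∃ v : Fin d → ℝ, v ≠ 0 ∧
      (Matrix.vecMulVec a a - Matrix.diagonal c).mulVec v = lam • v) :
    (∃! x : Fin d → ℝ, (∀ j, 0 < x j) ∧ (∑ j, x j) = 1 ∧
        ∃ T : ℝ, ∀ j, a j ^ 2 / x j - c j = T) ∧
      (∀ (x : Fin d → ℝ) (T : ℝ), (∀ j, 0 < x j) → (∑ j, x j) = 1 →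
        (∀ j, a j ^ 2 / x j - c j = T) → T = lam ∧ 0 < T) := by
  have hd : 0 < d := by
    rcases Nat.eq_zero_or_pos d with h | h
    · subst h; simp at hsum; linarith
    · exact h
  have hne : (Finset.univ : Finset (Fin d)).Nonempty := univ_nonempty_iff.mpr ⟨⟨0, hd⟩⟩
  -- strict antitonicity of F
  have mono : ∀ T T' : ℝ, (∀ j, 0 < T + c j) → (∀ j, 0 < T' + c j) → T < T' →
      (∑ j, a j ^ 2 / (T' + c j)) < ∑ j, a j ^ 2 / (T + c j) := by
    intro T T' hT hT' hlt
    refine Finset.sum_lt_sum_of_nonempty hne ?_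
    intro j _
    exact div_lt_div_of_pos_left (pow_pos (ha j) 2) (hT j) (by linarith [hT' j, hT j])
  have inj : ∀ T T' : ℝ, (∀ j, 0 < T + c j) → (∀ j, 0 < T' + c j) →
      (∑ j, a j ^ 2 / (T + c j)) = (∑ j, a j ^ 2 / (T' + c j)) → T = T' := by
    intro T T' hT hT' hEq
    rcases lt_trichotomy T T' with h | h | h
    · exact absurd hEq (ne_of_gt (mono T T' hT hT' h))
    · exact h
    · exact absurd hEq (ne_of_lt (mono T' T hT' hT h))
  -- from eigenvalue hypothesis: F(lam) = 1
  obtain ⟨v, hv0, heq⟩ := heig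
  have hlc : ∀ j, 0 < lam + c j := fun j => by linarith [hc j]
  set s : ℝ := ∑ j, a j * v j with hs
  have hvi : ∀ i, v i = a i * s / (lam + c i) := by
    intro i
    have h := congrFun heq i
    simp only [Matrix.mulVec, Matrix.sub_apply, Matrix.vecMulVec_apply, Matrix.diagonal,
      Pi.smul_apply, smul_eq_mul, Matrix.of_apply, dotProduct] at h
    have hci : c i * v i = ∑ j, (if i = j then c i else 0) * v j := by
      simp
    have h2 : a i * s - c i * v i = lam * v i := by
      rw [← h, hs, Finset.mul_sum, hci, ← Finset.sum_sub_distrib]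
      exact Finset.sum_congr rfl fun j _ => by ring
    have hL : lam + c i ≠ 0 := ne_of_gt (hlc i)
    field_simp
    linarith
  have hsne : s ≠ 0 := by
    intro h
    apply hv0
    funext i
    simp [hvi i, h]
  have hFlam : (∑ j, a j ^ 2 / (lam + c j)) = 1 := by
    have : s = s * ∑ j, a j ^ 2 / (lam + c j) := by
      rw [hs, Finset.mul_sum]
      refine Finset.sum_congr rfl fun j _ => ?_
      rw [hvi j]
      field_simp
      ring
    have h2 : s * 1 = s * ∑ j, a j ^ 2 / (lam + c j) := by linarith
    exact (mul_left_cancel₀ hsne h2).symm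
  -- the canonical point
  set x0 : Fin d → ℝ := fun j => a j ^ 2 / (lam + c j) with hx0
  have hx0pos : ∀ j, 0 < x0 j := fun j => div_pos (pow_pos (ha j) 2) (hlc j)
  have hx0sum : (∑ j, x0 j) = 1 := hFlam
  have hx0T : ∀ j, a j ^ 2 / x0 j - c j = lam := by
    intro j
    have hane : a j ^ 2 ≠ 0 := ne_of_gt (pow_pos (ha j) 2)
    have hL : lam + c j ≠ 0 := ne_of_gt (hlc j)
    have : a j ^ 2 / x0 j = lam + c j := by
      rw [hx0]; field_simp
      exact div_self (ne_of_gt (ha j))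
    rw [this]; ring
  -- any feasible point has T = lam and equals x0
  have key : ∀ (x : Fin d → ℝ) (T : ℝ), (∀ j, 0 < x j) → (∑ j, x j) = 1 →
      (∀ j, a j ^ 2 / x j - c j = T) → T = lam ∧ x = x0 := by
    intro x T hxpos hxsum hxT
    have hTc : ∀ j, 0 < T + c j := by
      intro j
      have := hxT j
      have : T + c j = a j ^ 2 / x j := by linarith
      rw [this]
      exact div_pos (pow_pos (ha j) 2) (hxpos j)
    have hxj : ∀ j, x j = a j ^ 2 / (T + c j) := by
      intro j
      have h1 : T + c j = a j ^ 2 / x j := by linarith [hxT j]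
      have hane : a j ^ 2 ≠ 0 := ne_of_gt (pow_pos (ha j) 2)
      have hxne : x j ≠ 0 := ne_of_gt (hxpos j)
      rw [h1]; field_simp
      exact (div_self (ne_of_gt (ha j))).symm
    have hFT : (∑ j, a j ^ 2 / (T + c j)) = 1 := by
      rw [← hxsum]
      exact (Finset.sum_congr rfl fun j _ => (hxj j).symm)
    have hTlam : T = lam := inj T lam hTc hlc (by rw [hFT, hFlam])
    refine ⟨hTlam, funext fun j => ?_⟩
    rw [hxj j, hTlam, hx0]
  constructor
  · refine ⟨x0, ⟨hx0pos, hx0sum, lam, hx0T⟩, ?_⟩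
    rintro y ⟨hypos, hysum, T, hyT⟩
    exact (key y T hypos hysum hyT).2
  · intro x T hxpos hxsum hxT
    have hTlam := (key x T hxpos hxsum hxT).1
    exact ⟨hTlam, hTlam ▸ hlam⟩
end
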